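/- For all a ∈ c₀₀ and all integers n ≥ 0, ‖a‖_{T̃} ≥ 2^{-n} ρ_n(a), where ρ_n = ‖·‖_{𝓕_n}. -/

import Mathlib

open Ordinal Filter Topology

namespace LTIndex

/-- `E < F` for finite sets: `max E < min F` (with `max ∅ = 0`, `min ∅ = ∞`),
equivalently every element of `E` is less than every element of `F`. -/
def finLT (E F : Finset ℕ) : Prop := ∀ a ∈ E, ∀ b ∈ F, a < b

/-- `min E` (junk value `0` when `E = ∅`). -/
noncomputable def minOf (E : Finset ℕ) : ℕ := sInf (E : Set ℕ)

/-- `{E₁, …, E_n}` is `𝓕`-admissible: the `Eᵢ` are nonempty, `E₁ < ⋯ < E_n`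
and `{min E₁, …, min E_n} ∈ 𝓕`. -/
def IsAdmissible (𝓕 : Set (Finset ℕ)) (l : List (Finset ℕ)) : Prop :=
  (∀ E ∈ l, E.Nonempty) ∧ l.Chain' finLT ∧ (l.map minOf).toFinset ∈ 𝓕

/-- `𝓜[𝓝]`. -/
def famComp (M N : Set (Finset ℕ)) : Set (Finset ℕ) :=
  {F | ∃ l : List (Finset ℕ), IsAdmissible M l ∧ (∀ E ∈ l, E ∈ N) ∧
    F = l.foldr (· ∪ ·) ∅}

/-- `(𝓜, 𝓝) = {M ∪ N : M < N, M ∈ 𝓜, N ∈ 𝓝}`. -/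
def pairFam (M N : Set (Finset ℕ)) : Set (Finset ℕ) :=
  {F | ∃ A ∈ M, ∃ B ∈ N, finLT A B ∧ F = A ∪ B}

/-- `𝓜² = (𝓜, 𝓜)`. -/
def sqFam (M : Set (Finset ℕ)) : Set (Finset ℕ) := pairFam M M

/-- `S₀ = {{n} : n ∈ ℕ} ∪ {∅}`. -/
def schreierZero : Set (Finset ℕ) := {F : Finset ℕ | F.card ≤ 1}

/-- `S₁ = {F : |F| ≤ min F}`. -/
noncomputable def schreierOne : Set (Finset ℕ) := {F : Finset ℕ | F.card ≤ minOf F}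

/-- A ladder system: for every countable limit ordinal `o`, `seq o` is a strictly
increasing sequence of ordinals below `o` with supremum `o`. -/
def IsCtblLadder (seq : Ordinal.{0} → ℕ → Ordinal.{0}) : Prop :=
  ∀ o : Ordinal, o.card ≤ Cardinal.aleph0 → Order.IsSuccLimit o →
    StrictMono (seq o) ∧ (∀ n : ℕ, seq o n < o) ∧ (⨆ n : ℕ, seq o n) = o

/-- The Schreier classes `S_α`, relative to a choice `seq` of ladders at limit
ordinals: `S₀` is the singletons together with `∅`, `S_{α+1} = S₁[S_α]`, and at a
limit `α` (with ladder `(α_n) = seq α`), `S_α = {F : F ∈ S_{α_n} for some n ≤ |F|}`. -/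
noncomputable def schreier (seq : Ordinal.{0} → ℕ → Ordinal.{0}) (o : Ordinal.{0}) :
    Set (Finset ℕ) :=
  Ordinal.limitRecOn (motive := fun _ => Set (Finset ℕ)) o schreierZero
    (fun _ S => famComp schreierOne S)
    (fun o _ ih => {F | ∃ n : ℕ, n ≤ F.card ∧ ∃ h : seq o n < o, F ∈ ih (seq o n) h})

/-- `σ_F(x) = ∑_{n ∈ F} |x n|`. -/
noncomputable def sigmaF (F : Finset ℕ) (x : ℕ →₀ ℝ) : ℝ := ∑ n ∈ F, |x n|

/-- `‖x‖_𝓕 = sup_{F ∈ 𝓕} σ_F(x)`. -/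
noncomputable def famNorm (𝓕 : Set (Finset ℕ)) (x : ℕ →₀ ℝ) : ℝ :=
  sSup {r : ℝ | ∃ F ∈ 𝓕, r = sigmaF F x}

/-- `E x`: the coordinate restriction of `x` to `E`. -/
noncomputable def restr (E : Finset ℕ) (x : ℕ →₀ ℝ) : ℕ →₀ ℝ :=
  Finsupp.filter (· ∈ E) x

/-- The norms `‖·‖_n` (when `Sadm = S_β`), resp. `‖·‖′_n` (when `Sadm = (S_β)²`):
`‖·‖₀ = ‖·‖_{S_α}` and
`‖x‖_{n+1} = max{‖x‖_n, sup{(1/2)∑ᵢ ‖Eᵢx‖_n : {E₁,…,E_j} Sadm-admissible}}`. -/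
noncomputable def normSeq (Sa Sadm : Set (Finset ℕ)) : ℕ → (ℕ →₀ ℝ) → ℝ
  | 0, x => famNorm Sa x
  | n + 1, x =>
      max (normSeq Sa Sadm n x)
        (sSup {r : ℝ | ∃ l : List (Finset ℕ), IsAdmissible Sadm l ∧
          r = (1 / 2) * ((l.map fun E => normSeq Sa Sadm n (restr E x)).sum)})

/-- `‖x‖_{T̃}` (resp. `‖x‖_{T̈}`): the limit (= supremum, the sequence being
nondecreasing) of the norms `‖x‖_n` (resp. `‖x‖′_n`). -/
noncomputable def tnorm (Sa Sadm : Set (Finset ℕ)) (x : ℕ →₀ ℝ) : ℝ :=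
  ⨆ n : ℕ, normSeq Sa Sadm n x

/-- The families `𝓕_n` (with `Sadm = S_β`), resp. `𝓕′_n` (with `Sadm = (S_β)²`):
`𝓕₀ = S_α`, `𝓕_{n+1} = Sadm[𝓕_n]`. -/
def famF (Sa Sadm : Set (Finset ℕ)) : ℕ → Set (Finset ℕ)
  | 0 => Sa
  | n + 1 => famComp Sadm (famF Sa Sadm n)

/-- The families `𝓖_n` (with `Sadm = S_β`), resp. `𝓖′_n` (with `Sadm = (S_β)²`),
reindexed: `famG Sadm n = 𝓖_{n+1}`, i.e. `famG Sadm 0 = 𝓖₁ = Sadm` and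
`𝓖_{n+2} = Sadm[𝓖_{n+1}]`. -/
def famG (Sadm : Set (Finset ℕ)) : ℕ → Set (Finset ℕ)
  | 0 => Sadm
  | n + 1 => famComp Sadm (famG Sadm n)

/-- Hereditary family. -/
def Hereditary (𝓕 : Set (Finset ℕ)) : Prop := ∀ A ∈ 𝓕, ∀ B ⊆ A, B ∈ 𝓕

/-- Spreading family. -/
def Spreading (𝓕 : Set (Finset ℕ)) : Prop :=
  ∀ A ∈ 𝓕, ∀ g : ℕ → ℕ, StrictMonoOn g (A : Set ℕ) → (∀ a ∈ A, a ≤ g a) →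
    A.image g ∈ 𝓕

/-- Compactness of a family of finite sets, viewed inside `2^ℕ` (ℕ → Bool with the
product topology) via characteristic functions. -/
def CompactFam (𝓕 : Set (Finset ℕ)) : Prop :=
  IsCompact ((fun A : Finset ℕ => fun n : ℕ => decide (n ∈ A)) '' 𝓕)

/-- Regular family: hereditary, spreading and compact. -/
def RegularFam (𝓕 : Set (Finset ℕ)) : Prop :=
  Hereditary 𝓕 ∧ Spreading 𝓕 ∧ CompactFam 𝓕

/-- The Cantor–Bendixson derivative of a family of finite subsets of ℕ: the set of
its limit points in the product topology of `2^ℕ` (a basic neighbourhood of `A` is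
determined by an agreement of initial segments). -/
def famDeriv (𝓕 : Set (Finset ℕ)) : Set (Finset ℕ) :=
  {A | ∀ m : ℕ, ∃ B ∈ 𝓕, B ≠ A ∧ B.filter (· ≤ m) = A.filter (· ≤ m)}

/-- Iterated Cantor–Bendixson derivatives `𝓕^{(o)}`. -/
noncomputable def famDerivIter (𝓕 : Set (Finset ℕ)) (o : Ordinal.{0}) : Set (Finset ℕ) :=
  Ordinal.limitRecOn (motive := fun _ => Set (Finset ℕ)) o 𝓕
    (fun _ S => famDeriv S)
    (fun o _ ih => ⋂ (o' : Ordinal) (h : o' < o), ih o' h)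

/-- One step of the standard representation: `A` is obtained from the remainder `R`
as `R ∩ [1, k]` where `k` is the largest element of `F` with `R ∩ [1, k] ∈ 𝓝`. -/
def stepOf (N : Set (Finset ℕ)) (F R A : Finset ℕ) : Prop :=
  ∃ k ∈ F, A = R.filter (· ≤ k) ∧ A ∈ N ∧
    ∀ k' ∈ F, R.filter (· ≤ k') ∈ N → k' ≤ k

/-- `IsStdRepFrom N F R L`: starting from remainder `R`, the list `L` is produced by
the greedy recursion defining the standard representation, exhausting `R`. -/
def IsStdRepFrom (N : Set (Finset ℕ)) (F : Finset ℕ) : Finset ℕ → List (Finset ℕ) → Prop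
  | R, [] => R = ∅
  | R, A :: L => stepOf N F R A ∧ IsStdRepFrom N F (R \ A) L

/-- `L` is the standard representation of `F` (as an element of `𝓜[𝓝]`). -/
def IsStdRep (N : Set (Finset ℕ)) (F : Finset ℕ) (L : List (Finset ℕ)) : Prop :=
  IsStdRepFrom N F F L

section Trees

variable {X : Type*}

/-- A tree on `X`: a set of nonempty finite sequences closed under nonempty initial
segments. -/
def IsTree (T : Set (List X)) : Prop :=
  ∀ l ∈ T, l ≠ [] ∧ ∀ m : ℕ, 0 < m → m < l.length → l.take m ∈ T

/-- A tree is well-founded if it has no infinite branch. -/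
def WellFoundedTree (T : Set (List X)) : Prop :=
  ¬ ∃ f : ℕ → X, ∀ n : ℕ, (List.ofFn fun i : Fin (n + 1) => f i) ∈ T

/-- The derived tree `D(T)`. -/
def treeDeriv (T : Set (List X)) : Set (List X) :=
  {l | l ∈ T ∧ ∃ x : X, l ++ [x] ∈ T}

/-- Iterated derived trees `D^o(T)`. -/
noncomputable def treeDerivIter (T : Set (List X)) (o : Ordinal.{0}) : Set (List X) :=
  Ordinal.limitRecOn (motive := fun _ => Set (List X)) o T
    (fun _ S => treeDeriv S)
    (fun o _ ih => ⋂ (o' : Ordinal) (h : o' < o), ih o' h)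

/-- The order `o(T)` of a (well-founded) tree. -/
noncomputable def treeOrder (T : Set (List X)) : Ordinal.{0} :=
  sInf {o : Ordinal | treeDerivIter T o = ∅}

end Trees

section Banach

variable (X : Type) [NormedAddCommGroup X] [NormedSpace ℝ X]

/-- `cs` witnesses that the node `l` is a finite block basis of `(e_i)`: each entry
of `l` is the (finite, nonzero) linear combination of the `e_i` given by the
corresponding entry of `cs`, and the supports are successive. -/
def IsBlockNode (e : ℕ → X) (l : List X) (cs : List (ℕ →₀ ℝ)) : Prop :=
  cs.length = l.length ∧
  (∀ (i : ℕ) (h : i < cs.length) (h' : i < l.length),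
    l.get ⟨i, h'⟩ = (cs.get ⟨i, h⟩).sum fun n r => r • e n) ∧
  (∀ c ∈ cs, c ≠ 0) ∧
  cs.Chain' fun c d => finLT c.support d.support

/-- `e` is a (Schauder) basis of `X`. -/
def IsSchauderBasis (e : ℕ → X) : Prop :=
  ∀ x : X, ∃! a : ℕ → ℝ,
    Tendsto (fun n => ∑ i ∈ Finset.range n, a i • e i) atTop (𝓝 x)

/-- An `ℓ¹`-`K` tree on `X`: a tree on the unit sphere of `X` such that every node
`(x₁, …, x_n)` satisfies `‖∑ aᵢ xᵢ‖ ≥ K⁻¹ ∑ |aᵢ|`. -/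
def IsL1Tree (K : ℝ) (T : Set (List X)) : Prop :=
  IsTree T ∧ ∀ l ∈ T, (∀ x ∈ l, ‖x‖ = 1) ∧
    ∀ a : Fin l.length → ℝ, K⁻¹ * ∑ i, |a i| ≤ ‖∑ i : Fin l.length, a i • l.get i‖

/-- `I(X, K)`: the supremum of the orders of well-founded `ℓ¹`-`K` trees on `X`. -/
noncomputable def bourgainIndexK (K : ℝ) : Ordinal.{0} :=
  ⨆ T : {T : Set (List X) // IsL1Tree X K T ∧ WellFoundedTree T}, treeOrder T.1

/-- The Bourgain `ℓ¹`-index `I(X) = sup_{1 ≤ K < ∞} I(X, K)`. -/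
noncomputable def bourgainIndex : Ordinal.{0} :=
  ⨆ K : {K : ℝ // 1 ≤ K}, bourgainIndexK X K.1

/-- `I_b(X, K)` relative to the basis `e`: the supremum of the orders of
well-founded `ℓ¹`-`K` block trees on `X`. -/
noncomputable def blockIndexK (e : ℕ → X) (K : ℝ) : Ordinal.{0} :=
  ⨆ T : {T : Set (List X) //
      IsL1Tree X K T ∧ (∀ l ∈ T, ∃ cs, IsBlockNode X e l cs) ∧ WellFoundedTree T},
    treeOrder T.1

/-- The block `ℓ¹`-index `I_b(X) = sup_{1 ≤ K < ∞} I_b(X, K)`. -/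
noncomputable def blockIndex (e : ℕ → X) : Ordinal.{0} :=
  ⨆ K : {K : ℝ // 1 ≤ K}, blockIndexK X e K.1

end Banach

/-! By induction on `n`: a set of `𝓕_{n+1}` is the union of an `S_β`-admissible family of sets
`E_i ∈ 𝓕_n`, so `σ_F(x) ≤ ∑ σ_{E_i}(E_i x) ≤ 2^n ∑ ‖E_i x‖_n ≤ 2^{n+1} ‖x‖_{n+1}`.
All suprema involved are finite, being bounded by the `ℓ¹` norm `σ_{supp x}(x)`: the sets of an
admissible family are successive, hence disjoint. -/

lemma sigmaF_nonneg (F : Finset ℕ) (x : ℕ →₀ ℝ) : 0 ≤ sigmaF F x :=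
  Finset.sum_nonneg fun _ _ => abs_nonneg _

lemma sigmaF_mono {x : ℕ →₀ ℝ} {E F : Finset ℕ} (hEF : E ⊆ F) : sigmaF E x ≤ sigmaF F x :=
  Finset.sum_le_sum_of_subset_of_nonneg hEF fun _ _ _ => abs_nonneg _

lemma sigmaF_le_sigmaF_support {x : ℕ →₀ ℝ} (F : Finset ℕ) :
    sigmaF F x ≤ sigmaF x.support x := by
  classical
  calc sigmaF F x = sigmaF (F ∩ x.support) x := by
        refine (Finset.sum_subset Finset.inter_subset_left fun k hk hk' => ?_).symm
        simp [Finsupp.notMem_support_iff.1 fun h => hk' (Finset.mem_inter.2 ⟨hk, h⟩)]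
    _ ≤ sigmaF x.support x := sigmaF_mono Finset.inter_subset_right

lemma sigmaF_union_le (E F : Finset ℕ) (x : ℕ →₀ ℝ) :
    sigmaF (E ∪ F) x ≤ sigmaF E x + sigmaF F x := by
  classical
  have hinter := sigmaF_nonneg (E ∩ F) x
  unfold sigmaF at *
  linarith [Finset.sum_union_inter (s₁ := E) (s₂ := F) (f := fun k => |x k|)]

lemma sigmaF_restr (E : Finset ℕ) (x : ℕ →₀ ℝ) : sigmaF E (restr E x) = sigmaF E x :=
  Finset.sum_congr rfl fun _ hk => by rw [restr, Finsupp.filter_apply_pos _ _ hk]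

lemma sigmaF_support_restr_le (E : Finset ℕ) (x : ℕ →₀ ℝ) :
    sigmaF (restr E x).support (restr E x) ≤ sigmaF E x := by
  classical
  have hsupp : (restr E x).support ⊆ E := by
    intro k hk
    rw [restr, Finsupp.support_filter] at hk
    exact (Finset.mem_filter.1 hk).2
  exact (sigmaF_mono hsupp).trans_eq (sigmaF_restr E x)

lemma famNorm_nonneg (𝓕 : Set (Finset ℕ)) (x : ℕ →₀ ℝ) : 0 ≤ famNorm 𝓕 x :=
  Real.sSup_nonneg (by rintro r ⟨F, _, rfl⟩; exact sigmaF_nonneg F x)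

lemma sigmaF_le_famNorm {𝓕 : Set (Finset ℕ)} {F : Finset ℕ} (hF : F ∈ 𝓕) (x : ℕ →₀ ℝ) :
    sigmaF F x ≤ famNorm 𝓕 x :=
  le_csSup ⟨sigmaF x.support x, by rintro r ⟨F, _, rfl⟩; exact sigmaF_le_sigmaF_support F⟩
    ⟨F, hF, rfl⟩

lemma famNorm_le_sigmaF_support (𝓕 : Set (Finset ℕ)) (x : ℕ →₀ ℝ) :
    famNorm 𝓕 x ≤ sigmaF x.support x :=
  Real.sSup_le (by rintro r ⟨F, _, rfl⟩; exact sigmaF_le_sigmaF_support F)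
    (sigmaF_nonneg _ x)

lemma finLT_foldr_union {E : Finset ℕ} {l : List (Finset ℕ)} (hne : ∀ F ∈ l, F.Nonempty)
    (hl : (E :: l).IsChain finLT) : finLT E (l.foldr (· ∪ ·) ∅) := by
  induction l generalizing E with
  | nil => simp [finLT]
  | cons F l ih =>
    obtain ⟨hEF, hl⟩ := List.isChain_cons_cons.1 hl
    obtain ⟨f, hf⟩ := hne F List.mem_cons_self
    have hF : finLT F (l.foldr (· ∪ ·) ∅) :=
      ih (fun G hG => hne G (List.mem_cons_of_mem F hG)) hl
    intro a ha b hb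
    rcases Finset.mem_union.1 hb with hb | hb
    · exact hEF a ha b hb
    · exact (hEF a ha f hf).trans (hF f hf b hb)

lemma sigmaF_foldr_union_le (l : List (Finset ℕ)) (x : ℕ →₀ ℝ) :
    sigmaF (l.foldr (· ∪ ·) ∅) x ≤ (l.map (sigmaF · x)).sum := by
  induction l with
  | nil => simp [sigmaF]
  | cons E l ih =>
    simpa only [List.foldr_cons, List.map_cons, List.sum_cons] using
      (sigmaF_union_le E _ x).trans (add_le_add le_rfl ih)

lemma sigmaF_foldr_union_of_chain {l : List (Finset ℕ)} (hne : ∀ E ∈ l, E.Nonempty)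
    (hl : l.IsChain finLT) (x : ℕ →₀ ℝ) :
    sigmaF (l.foldr (· ∪ ·) ∅) x = (l.map (sigmaF · x)).sum := by
  classical
  induction l with
  | nil => simp [sigmaF]
  | cons E l ih =>
    have hne' : ∀ F ∈ l, F.Nonempty := fun F hF => hne F (List.mem_cons_of_mem E hF)
    have hdisj : Disjoint E (l.foldr (· ∪ ·) ∅) :=
      Finset.disjoint_left.2 fun a ha ha' => lt_irrefl a (finLT_foldr_union hne' hl a ha a ha')
    rw [List.foldr_cons, List.map_cons, List.sum_cons, ← ih hne' hl.tail]
    exact Finset.sum_union hdisj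

lemma sum_le_sigmaF_support_of_chain {l : List (Finset ℕ)} (hne : ∀ E ∈ l, E.Nonempty)
    (hl : l.IsChain finLT) {x : ℕ →₀ ℝ} {f : Finset ℕ → ℝ} (hf : ∀ E ∈ l, f E ≤ sigmaF E x) :
    (l.map f).sum ≤ sigmaF x.support x :=
  calc (l.map f).sum ≤ (l.map (sigmaF · x)).sum := List.sum_le_sum hf
    _ = sigmaF (l.foldr (· ∪ ·) ∅) x := (sigmaF_foldr_union_of_chain hne hl x).symm
    _ ≤ sigmaF x.support x := sigmaF_le_sigmaF_support _

section NormSeq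

variable {Sa Sadm : Set (Finset ℕ)}

lemma normSeq_nonneg (n : ℕ) (x : ℕ →₀ ℝ) : 0 ≤ normSeq Sa Sadm n x := by
  induction n with
  | zero => exact famNorm_nonneg Sa x
  | succ n ih => exact ih.trans (le_max_left _ _)

lemma half_sum_normSeq_restr_le {n : ℕ}
    (hn : ∀ y, normSeq Sa Sadm n y ≤ sigmaF y.support y) {l : List (Finset ℕ)}
    (hl : IsAdmissible Sadm l) (x : ℕ →₀ ℝ) :
    1 / 2 * (l.map fun E => normSeq Sa Sadm n (restr E x)).sum ≤ sigmaF x.support x := by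
  have hsum : (l.map fun E => normSeq Sa Sadm n (restr E x)).sum ≤ sigmaF x.support x :=
    sum_le_sigmaF_support_of_chain hl.1 hl.2.1 fun E _ =>
      (hn _).trans (sigmaF_support_restr_le E x)
  linarith [sigmaF_nonneg x.support x]

lemma normSeq_le_sigmaF_support (n : ℕ) (x : ℕ →₀ ℝ) :
    normSeq Sa Sadm n x ≤ sigmaF x.support x := by
  induction n generalizing x with
  | zero => exact famNorm_le_sigmaF_support Sa x
  | succ n ih =>
    refine max_le (ih x) (Real.sSup_le ?_ (sigmaF_nonneg _ x))
    rintro r ⟨l, hl, rfl⟩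
    exact half_sum_normSeq_restr_le ih hl x

lemma half_sum_normSeq_restr_le_normSeq_succ {n : ℕ} {l : List (Finset ℕ)}
    (hl : IsAdmissible Sadm l) (x : ℕ →₀ ℝ) :
    1 / 2 * (l.map fun E => normSeq Sa Sadm n (restr E x)).sum ≤ normSeq Sa Sadm (n + 1) x := by
  rw [normSeq]
  refine le_max_of_le_right (le_csSup ⟨sigmaF x.support x, ?_⟩ ⟨l, hl, rfl⟩)
  rintro r ⟨l', hl', rfl⟩
  exact half_sum_normSeq_restr_le (normSeq_le_sigmaF_support n) hl' x

lemma normSeq_le_tnorm (n : ℕ) (x : ℕ →₀ ℝ) : normSeq Sa Sadm n x ≤ tnorm Sa Sadm x :=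
  le_ciSup (f := fun m => normSeq Sa Sadm m x)
    ⟨sigmaF x.support x, by rintro r ⟨m, rfl⟩; exact normSeq_le_sigmaF_support m x⟩ n

lemma famNorm_famF_le (n : ℕ) (x : ℕ →₀ ℝ) :
    famNorm (famF Sa Sadm n) x ≤ 2 ^ n * normSeq Sa Sadm n x := by
  induction n generalizing x with
  | zero => simp [famF, normSeq]
  | succ n ih =>
    refine Real.sSup_le ?_ (mul_nonneg (by positivity) (normSeq_nonneg _ x))
    rintro r ⟨F, ⟨l, hl, hlF, rfl⟩, rfl⟩
    have hblock : ∀ E ∈ l, sigmaF E x ≤ 2 ^ n * normSeq Sa Sadm n (restr E x) := fun E hE =>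
      calc sigmaF E x = sigmaF E (restr E x) := (sigmaF_restr E x).symm
        _ ≤ famNorm (famF Sa Sadm n) (restr E x) := sigmaF_le_famNorm (hlF E hE) _
        _ ≤ 2 ^ n * normSeq Sa Sadm n (restr E x) := ih _
    calc sigmaF (l.foldr (· ∪ ·) ∅) x ≤ (l.map (sigmaF · x)).sum := sigmaF_foldr_union_le l x
      _ ≤ (l.map fun E => 2 ^ n * normSeq Sa Sadm n (restr E x)).sum := List.sum_le_sum hblock
      _ = 2 ^ (n + 1) * (1 / 2 * (l.map fun E => normSeq Sa Sadm n (restr E x)).sum) := by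
        rw [List.sum_map_mul_left]; ring
      _ ≤ 2 ^ (n + 1) * normSeq Sa Sadm (n + 1) x :=
        mul_le_mul_of_nonneg_left (half_sum_normSeq_restr_le_normSeq_succ hl x) (by positivity)

theorem famNorm_famF_div_le_tnorm (n : ℕ) (x : ℕ →₀ ℝ) :
    1 / 2 ^ n * famNorm (famF Sa Sadm n) x ≤ tnorm Sa Sadm x :=
  calc 1 / 2 ^ n * famNorm (famF Sa Sadm n) x
      ≤ 1 / 2 ^ n * (2 ^ n * normSeq Sa Sadm n x) :=
        mul_le_mul_of_nonneg_left (famNorm_famF_le n x) (by positivity)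
    _ = normSeq Sa Sadm n x := by field_simp
    _ ≤ tnorm Sa Sadm x := normSeq_le_tnorm n x

end NormSeq

theorem statement4_general (seq : Ordinal → ℕ → Ordinal)
    (a b : Ordinal) (x : ℕ →₀ ℝ) (n : ℕ) :
    (1 / 2 ^ n) * famNorm (famF (schreier seq a) (schreier seq b) n) x ≤
      tnorm (schreier seq a) (schreier seq b) x :=
  famNorm_famF_div_le_tnorm n x

/-- Proposition 4 of the paper: `‖a‖_{T̃} ≥ 2^{-n} ρ_n(a)` for all
`a ∈ c₀₀` and `n ≥ 0`, where `ρ_n = ‖·‖_{𝓕_n}`. -/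
theorem statement4 (seq : Ordinal → ℕ → Ordinal) (hseq : IsCtblLadder seq)
    (a b : Ordinal) (ha : a.card ≤ Cardinal.aleph0) (hb : b.card ≤ Cardinal.aleph0)
    (hb0 : b ≠ 0) (x : ℕ →₀ ℝ) (n : ℕ) :
    (1 / 2 ^ n) * famNorm (famF (schreier seq a) (schreier seq b) n) x ≤
      tnorm (schreier seq a) (schreier seq b) x :=
  statement4_general seq a b x n

end LTIndex
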